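/- Let μ be a compactly supported Borel probability measure on ℝ^d × ℝ^d with velocity barycenter v̄, and suppose supp(μ) ⊆ B̄(x̄, X) × B̄(v̄, V) for some x̄ ∈ ℝ^d and X, V ≥ 0. Then for every (x, v) ∈ ℝ^d × ℝ^d with ‖x − x̄‖ ≤ X and ‖v − v̄‖ = V, one has ⟨ξ[μ](x, v), v − v̄⟩ ≤ −φ(2X)·V². -/

import Mathlib

open MeasureTheory Metric Set

/-- The (topological) support of a measure. -/
def msupp {α : Type*} [TopologicalSpace α] [MeasurableSpace α]
    (μ : Measure α) : Set α :=
  {x | ∀ U : Set α, IsOpen U → x ∈ U → 0 < μ U}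

/-- The Cucker–Smale interaction kernel. -/
noncomputable def xi {d : ℕ} (φ : ℝ → ℝ)
    (μ : Measure (EuclideanSpace ℝ (Fin d) × EuclideanSpace ℝ (Fin d)))
    (x v : EuclideanSpace ℝ (Fin d)) : EuclideanSpace ℝ (Fin d) :=
  ∫ p, φ (‖x - p.1‖) • (p.2 - v) ∂μ

/-!
Write `c = v - v̄`. Every velocity `w` in the support satisfies `‖w - v̄‖ ≤ ‖c‖`, so by
Cauchy–Schwarz `⟪w - v, c⟫ = ⟪w - v̄, c⟫ - ‖c‖² ≤ 0`. Every position in the support is within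
`2X` of `x`, so the weight `φ(‖x - y‖)` is at least `φ(2X)`, and the integrand
`φ(‖x - y‖) ⟪w - v, c⟫` is at most `φ(2X) ⟪w - v, c⟫`, whose integral is
`φ(2X) ⟪v̄ - v, c⟫ = -φ(2X) V²`.
-/

lemma msupp_eq_support {α : Type*} [TopologicalSpace α] [MeasurableSpace α]
    (μ : Measure α) : msupp μ = μ.support := by
  rw [Measure.support_eq_forall_isOpen]
  exact Set.ext fun _ => forall_congr' fun _ => Imp.swap

lemma ae_mem_msupp {α : Type*} [TopologicalSpace α] [HereditarilyLindelofSpace α]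
    [MeasurableSpace α] (μ : Measure α) : ∀ᵐ x ∂μ, x ∈ msupp μ := by
  rw [msupp_eq_support]
  exact Measure.support_mem_ae

section Barycenter

variable {Ω E : Type*} [MeasurableSpace Ω] [NormedAddCommGroup E] [InnerProductSpace ℝ E]

open scoped RealInnerProductSpace

lemma inner_sub_sub_nonpos_of_norm_sub_le {u v w : E} (h : ‖w - u‖ ≤ ‖v - u‖) :
    ⟪w - v, v - u⟫ ≤ 0 := by
  have hsplit : w - v = (w - u) - (v - u) := by abel
  rw [hsplit, inner_sub_left, real_inner_self_eq_norm_sq]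
  nlinarith [real_inner_le_norm (w - u) (v - u), norm_nonneg (v - u)]

variable [CompleteSpace E]

lemma integral_inner_sub_const_eq {μ : Measure Ω} [IsProbabilityMeasure μ] {w : Ω → E}
    (hw : Integrable w μ) (v c : E) :
    ∫ ω, ⟪w ω - v, c⟫ ∂μ = ⟪(∫ ω, w ω ∂μ) - v, c⟫ := by
  simp_rw [real_inner_comm c]
  have hwv : Integrable (fun ω => w ω - v) μ := hw.sub (integrable_const v)
  rw [integral_inner hwv, integral_sub hw (integrable_const v), integral_const, probReal_univ,
    one_smul]

theorem inner_integral_smul_sub_le {μ : Measure Ω} [IsProbabilityMeasure μ] {a : Ω → ℝ}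
    {w : Ω → E} {v : E} {m : ℝ} (hw : Integrable w μ)
    (haw : Integrable (fun ω => a ω • (w ω - v)) μ) (ha : ∀ᵐ ω ∂μ, m ≤ a ω)
    (hwv : ∀ᵐ ω ∂μ, ‖w ω - ∫ ω, w ω ∂μ‖ ≤ ‖v - ∫ ω, w ω ∂μ‖) :
    ⟪∫ ω, a ω • (w ω - v) ∂μ, v - ∫ ω, w ω ∂μ⟫ ≤ -m * ‖v - ∫ ω, w ω ∂μ‖ ^ 2 := by
  set c := v - ∫ ω, w ω ∂μ
  have hinner : Integrable (fun ω => ⟪w ω - v, c⟫) μ := (hw.sub (integrable_const v)).inner_const c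
  calc ⟪∫ ω, a ω • (w ω - v) ∂μ, c⟫ = ∫ ω, a ω * ⟪w ω - v, c⟫ ∂μ := by
        rw [real_inner_comm, ← integral_inner haw c]
        simp_rw [real_inner_smul_right, real_inner_comm c]
    _ ≤ ∫ ω, m * ⟪w ω - v, c⟫ ∂μ := by
        refine integral_mono_ae ?_ (hinner.const_mul m) ?_
        · simpa only [real_inner_smul_left] using haw.inner_const (𝕜 := ℝ) c
        · filter_upwards [ha, hwv] with ω hm hwω
          exact mul_le_mul_of_nonpos_right hm (inner_sub_sub_nonpos_of_norm_sub_le hwω)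
    _ = -m * ‖c‖ ^ 2 := by
        rw [integral_const_mul, integral_inner_sub_const_eq hw, ← neg_sub, inner_neg_left,
          real_inner_self_eq_norm_sq]
        ring

end Barycenter

theorem stmt8_general {d : ℕ} (φ : ℝ → ℝ)
    (hφa : Antitone φ)
    (μ : Measure (EuclideanSpace ℝ (Fin d) × EuclideanSpace ℝ (Fin d)))
    [IsProbabilityMeasure μ]
    (xbar : EuclideanSpace ℝ (Fin d)) (vbar : EuclideanSpace ℝ (Fin d))
    (hvbar : vbar = ∫ p, p.2 ∂μ)
    (X V : ℝ)
    (hsupp : msupp μ ⊆ closedBall xbar X ×ˢ closedBall vbar V)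
    (x v : EuclideanSpace ℝ (Fin d)) (hx : ‖x - xbar‖ ≤ X) (hv : ‖v - vbar‖ = V) :
    inner ℝ (xi φ μ x v) (v - vbar) ≤ -(φ (2 * X)) * V ^ 2 := by
  have hae : ∀ᵐ p ∂μ, ‖p.1 - xbar‖ ≤ X ∧ ‖p.2 - vbar‖ ≤ V :=
    (ae_mem_msupp μ).mono fun p hp => by
      simpa only [mem_prod, mem_closedBall, dist_eq_norm] using hsupp hp
  have hdist : ∀ᵐ p ∂μ, ‖x - p.1‖ ≤ 2 * X := hae.mono fun p hp => by
    linarith [norm_sub_le_norm_sub_add_norm_sub x xbar p.1, norm_sub_rev xbar p.1, hp.1]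
  have hsnd : Integrable Prod.snd μ :=
    .of_bound measurable_snd.aestronglyMeasurable (‖vbar‖ + V) (hae.mono fun p hp => by
      linarith [norm_le_norm_add_norm_sub' p.2 vbar, hp.2])
  have hweight : ∀ᵐ p ∂μ, ‖φ ‖x - p.1‖‖ ≤ max |φ (2 * X)| |φ 0| := hdist.mono fun p hp =>
    abs_le_max_abs_abs (hφa hp) (hφa (norm_nonneg _))
  have hkernel : Integrable (fun p => φ ‖x - p.1‖ • (p.2 - v)) μ :=
    (hsnd.sub (integrable_const v)).bdd_smul _
      (hφa.measurable.comp (measurable_const.sub measurable_fst).norm).aestronglyMeasurable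
      hweight
  subst hvbar hv
  exact inner_integral_smul_sub_le hsnd hkernel (hdist.mono fun p hp => hφa hp)
    (hae.mono fun p hp => hp.2)

theorem stmt8 {d : ℕ} (hd : 0 < d) (φ : ℝ → ℝ) (hφc : Continuous φ)
    (hφa : Antitone φ) (hφp : ∀ r : ℝ, 0 < φ r)
    (μ : Measure (EuclideanSpace ℝ (Fin d) × EuclideanSpace ℝ (Fin d)))
    [IsProbabilityMeasure μ]
    (xbar : EuclideanSpace ℝ (Fin d)) (vbar : EuclideanSpace ℝ (Fin d))
    (hvbar : vbar = ∫ p, p.2 ∂μ)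
    (X V : ℝ) (hX : 0 ≤ X) (hV : 0 ≤ V)
    (hsupp : msupp μ ⊆ closedBall xbar X ×ˢ closedBall vbar V)
    (x v : EuclideanSpace ℝ (Fin d)) (hx : ‖x - xbar‖ ≤ X) (hv : ‖v - vbar‖ = V) :
    inner ℝ (xi φ μ x v) (v - vbar) ≤ -(φ (2 * X)) * V ^ 2 :=
  stmt8_general φ hφa μ xbar vbar hvbar X V hsupp x v hx hv
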